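/- Let R be an algebraic Kähler curvature tensor on ℂⁿ with nonnegative orthogonal bisectional curvature. Let E₁, E₂ ∈ ℂⁿ be unit vectors with ⟨E₁, E₂⟩ = 0 and suppose R(E₁, Ē₁, E₂, Ē₂) = 0. Then R(E₁, Ē₂, E₁, Ē₁) = R(E₁, Ē₂, E₂, Ē₂). -/

import Mathlib

open scoped ComplexOrder

/-- The quadrilinear form `R(V, W̄, X, Ȳ) = Σ R_{ij̄kl̄} V^i conj(W^j) X^k conj(Y^l)`
associated to an algebraic Kähler curvature tensor `R` on `ℂⁿ`. -/
noncomputable def kahlerQuad {n : ℕ} (R : Fin n → Fin n → Fin n → Fin n → ℂ)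
    (V W X Y : Fin n → ℂ) : ℂ :=
  ∑ i, ∑ j, ∑ k, ∑ l,
    R i j k l * V i * (starRingEnd ℂ) (W j) * X k * (starRingEnd ℂ) (Y l)

/-- The standard Hermitian inner product `⟨V, W⟩ = Σ_i V^i conj(W^i)` on `ℂⁿ`. -/
noncomputable def hermInner {n : ℕ} (V W : Fin n → ℂ) : ℂ :=
  ∑ i, V i * (starRingEnd ℂ) (W i)

/-!
Rotate the orthonormal pair infinitesimally inside its complex span:
`V_t = E₁ + t a E₂` and `W_t = E₂ - t ā E₁` stay orthogonal, so `t ↦ R(V_t, V̄_t, W_t, W̄_t)` is a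
nonnegative real quartic polynomial in `t` vanishing at `t = 0`, and its linear coefficient must
vanish. By the Kähler symmetries that coefficient is `2 Re(ā D)` with
`D = R(E₁, Ē₂, E₂, Ē₂) - R(E₁, Ē₂, E₁, Ē₁)`; taking `a = D` gives `2 |D|² = 0`.
-/

open ComplexConjugate

lemma eq_zero_of_forall_nonneg_quartic {a b c d : ℝ}
    (h : ∀ t : ℝ, 0 ≤ t * a + t ^ 2 * b + t ^ 3 * c + t ^ 4 * d) : a = 0 := by
  have hmin : IsLocalMin (fun t : ℝ ↦ t * a + t ^ 2 * b + t ^ 3 * c + t ^ 4 * d) 0 :=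
    Filter.Eventually.of_forall fun t ↦ by simpa using h t
  have hderiv : HasDerivAt (fun t : ℝ ↦ t * a + t ^ 2 * b + t ^ 3 * c + t ^ 4 * d) a 0 := by
    simpa using ((((hasDerivAt_id' (0 : ℝ)).mul_const a).fun_add
      ((hasDerivAt_pow 2 0).mul_const b)).fun_add ((hasDerivAt_pow 3 0).mul_const c)).fun_add
      ((hasDerivAt_pow 4 0).mul_const d)
  exact hmin.hasDerivAt_eq_zero hderiv

section HermInner

variable {n : ℕ}

lemma hermInner_eq_dotProduct (V W : Fin n → ℂ) : hermInner V W = V ⬝ᵥ star W := rfl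

lemma hermInner_add_smul_add_smul_eq_zero {E₁ E₂ : Fin n → ℂ}
    (hE : hermInner E₁ E₁ = hermInner E₂ E₂) (horth : hermInner E₁ E₂ = 0) (a : ℂ) (t : ℝ) :
    hermInner (E₁ + (t : ℂ) • a • E₂) (E₂ + (t : ℂ) • -conj a • E₁) = 0 := by
  have horth' : hermInner E₂ E₁ = 0 := by
    rw [hermInner_eq_dotProduct, Matrix.dotProduct_star, ← hermInner_eq_dotProduct, horth,
      star_zero]
  simp only [hermInner_eq_dotProduct, star_add, star_smul, add_dotProduct, dotProduct_add,
    smul_dotProduct, dotProduct_smul] at *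
  rw [horth, horth', hE]
  simp

end HermInner

section KahlerQuad

variable {n : ℕ} (R : Fin n → Fin n → Fin n → Fin n → ℂ) (V V' W W' X X' Y Y' : Fin n → ℂ)
  (c : ℂ)

lemma kahlerQuad_add₁ :
    kahlerQuad R (V + V') W X Y = kahlerQuad R V W X Y + kahlerQuad R V' W X Y := by
  simp only [kahlerQuad, Pi.add_apply, mul_add, add_mul, Finset.sum_add_distrib]

lemma kahlerQuad_add₂ :
    kahlerQuad R V (W + W') X Y = kahlerQuad R V W X Y + kahlerQuad R V W' X Y := by
  simp only [kahlerQuad, Pi.add_apply, map_add, mul_add, add_mul, Finset.sum_add_distrib]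

lemma kahlerQuad_add₃ :
    kahlerQuad R V W (X + X') Y = kahlerQuad R V W X Y + kahlerQuad R V W X' Y := by
  simp only [kahlerQuad, Pi.add_apply, mul_add, add_mul, Finset.sum_add_distrib]

lemma kahlerQuad_add₄ :
    kahlerQuad R V W X (Y + Y') = kahlerQuad R V W X Y + kahlerQuad R V W X Y' := by
  simp only [kahlerQuad, Pi.add_apply, map_add, mul_add, Finset.sum_add_distrib]

lemma kahlerQuad_smul₁ : kahlerQuad R (c • V) W X Y = c * kahlerQuad R V W X Y := by
  simp only [kahlerQuad, Pi.smul_apply, smul_eq_mul, Finset.mul_sum]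
  congr! 4 with i - j - k - l
  ring

lemma kahlerQuad_smul₂ : kahlerQuad R V (c • W) X Y = conj c * kahlerQuad R V W X Y := by
  simp only [kahlerQuad, Pi.smul_apply, smul_eq_mul, map_mul, Finset.mul_sum]
  congr! 4 with i - j - k - l
  ring

lemma kahlerQuad_smul₃ : kahlerQuad R V W (c • X) Y = c * kahlerQuad R V W X Y := by
  simp only [kahlerQuad, Pi.smul_apply, smul_eq_mul, Finset.mul_sum]
  congr! 4 with i - j - k - l
  ring

lemma kahlerQuad_smul₄ : kahlerQuad R V W X (c • Y) = conj c * kahlerQuad R V W X Y := by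
  simp only [kahlerQuad, Pi.smul_apply, smul_eq_mul, map_mul, Finset.mul_sum]
  congr! 4 with i - j - k - l
  ring

lemma kahlerQuad_comm₂₄ (hsym2 : ∀ i j k l, R i j k l = R i l k j) :
    kahlerQuad R V W X Y = kahlerQuad R V Y X W := by
  unfold kahlerQuad
  refine Finset.sum_congr rfl fun i _ ↦ ?_
  rw [Finset.sum_comm]
  conv_rhs => rw [Finset.sum_comm]
  refine Finset.sum_congr rfl fun k _ ↦ ?_
  rw [Finset.sum_comm]
  congr! 2 with l - j
  rw [hsym2]
  ring

lemma kahlerQuad_conj_symm (hreal : ∀ i j k l, R i j k l = conj (R j i l k)) :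
    conj (kahlerQuad R W V Y X) = kahlerQuad R V W X Y := by
  simp only [kahlerQuad, map_sum, map_mul, Complex.conj_conj, ← hreal]
  rw [Finset.sum_comm]
  congr! 2 with j - i
  rw [Finset.sum_comm]
  congr! 2 with l - k
  ring

lemma kahlerQuad_add_smul (A B : Fin n → ℂ) (t : ℝ) :
    kahlerQuad R (V + (t : ℂ) • A) (V + (t : ℂ) • A) (W + (t : ℂ) • B) (W + (t : ℂ) • B) =
      kahlerQuad R V V W W
      + t * (kahlerQuad R A V W W + kahlerQuad R V A W W + kahlerQuad R V V B W
        + kahlerQuad R V V W B)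
      + t ^ 2 * (kahlerQuad R A A W W + kahlerQuad R A V B W + kahlerQuad R A V W B
        + kahlerQuad R V A B W + kahlerQuad R V A W B + kahlerQuad R V V B B)
      + t ^ 3 * (kahlerQuad R A A B W + kahlerQuad R A A W B + kahlerQuad R A V B B
        + kahlerQuad R V A B B)
      + t ^ 4 * kahlerQuad R A A B B := by
  simp only [kahlerQuad_add₁, kahlerQuad_add₂, kahlerQuad_add₃, kahlerQuad_add₄,
    kahlerQuad_smul₁, kahlerQuad_smul₂, kahlerQuad_smul₃, kahlerQuad_smul₄, Complex.conj_ofReal]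
  ring

lemma kahlerQuad_first_variation_re_eq_zero
    (hnonneg : ∀ V W : Fin n → ℂ, hermInner V W = 0 → 0 ≤ kahlerQuad R V V W W)
    {V A W B : Fin n → ℂ} (horth : ∀ t : ℝ, hermInner (V + (t : ℂ) • A) (W + (t : ℂ) • B) = 0)
    (hzero : kahlerQuad R V V W W = 0) :
    (kahlerQuad R A V W W + kahlerQuad R V A W W + kahlerQuad R V V B W
      + kahlerQuad R V V W B).re = 0 := by
  apply eq_zero_of_forall_nonneg_quartic
  intro t
  have h := hnonneg _ _ (horth t)
  rw [kahlerQuad_add_smul, hzero, zero_add] at h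
  simpa [← Complex.ofReal_pow] using (Complex.le_def.mp h).1

end KahlerQuad

theorem orthogonal_bisectional_claim_two_four_general
    {n : ℕ} (R : Fin n → Fin n → Fin n → Fin n → ℂ)
    (hsym2 : ∀ i j k l, R i j k l = R i l k j)
    (hreal : ∀ i j k l, R i j k l = (starRingEnd ℂ) (R j i l k))
    (hnonneg : ∀ V W : Fin n → ℂ, hermInner V W = 0 → 0 ≤ kahlerQuad R V V W W)
    (E₁ E₂ : Fin n → ℂ)
    (hE₁ : hermInner E₁ E₁ = 1) (hE₂ : hermInner E₂ E₂ = 1)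
    (horth : hermInner E₁ E₂ = 0)
    (hzero : kahlerQuad R E₁ E₁ E₂ E₂ = 0) :
    kahlerQuad R E₁ E₂ E₁ E₁ = kahlerQuad R E₁ E₂ E₂ E₂ := by
  set D := kahlerQuad R E₁ E₂ E₂ E₂ - kahlerQuad R E₁ E₂ E₁ E₁ with hD
  have hvar := kahlerQuad_first_variation_re_eq_zero R hnonneg
    (hermInner_add_smul_add_smul_eq_zero (hE₁.trans hE₂.symm) horth D) hzero
  have hfirst : kahlerQuad R (D • E₂) E₁ E₂ E₂ + kahlerQuad R E₁ (D • E₂) E₂ E₂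
      + kahlerQuad R E₁ E₁ (-conj D • E₁) E₂ + kahlerQuad R E₁ E₁ E₂ (-conj D • E₁)
      = 2 * Complex.normSq D := by
    simp only [kahlerQuad_smul₁, kahlerQuad_smul₂, kahlerQuad_smul₃, kahlerQuad_smul₄, map_neg,
      Complex.conj_conj]
    rw [← kahlerQuad_conj_symm R _ _ _ _ hreal, ← kahlerQuad_conj_symm R E₁ E₁ E₂ E₁ hreal,
      kahlerQuad_comm₂₄ R E₁ E₁ E₁ E₂ hsym2, Complex.normSq_eq_conj_mul_self, hD, map_sub]
    ring
  rw [hfirst] at hvar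
  have hD0 : D = 0 := by simpa using hvar
  linear_combination -hD0

/-- Let `R` be an algebraic Kähler curvature tensor on `ℂⁿ` with nonnegative
orthogonal bisectional curvature.  Let `E₁, E₂ ∈ ℂⁿ` be unit vectors with `⟨E₁, E₂⟩ = 0` and
suppose `R(E₁, Ē₁, E₂, Ē₂) = 0`.  Then `R(E₁, Ē₂, E₁, Ē₁) = R(E₁, Ē₂, E₂, Ē₂)`. -/
theorem orthogonal_bisectional_claim_two_four
    {n : ℕ} (R : Fin n → Fin n → Fin n → Fin n → ℂ)
    (hsym1 : ∀ i j k l, R i j k l = R k j i l)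
    (hsym2 : ∀ i j k l, R i j k l = R i l k j)
    (hreal : ∀ i j k l, R i j k l = (starRingEnd ℂ) (R j i l k))
    (hnonneg : ∀ V W : Fin n → ℂ, hermInner V W = 0 → 0 ≤ kahlerQuad R V V W W)
    (E₁ E₂ : Fin n → ℂ)
    (hE₁ : hermInner E₁ E₁ = 1) (hE₂ : hermInner E₂ E₂ = 1)
    (horth : hermInner E₁ E₂ = 0)
    (hzero : kahlerQuad R E₁ E₁ E₂ E₂ = 0) :
    kahlerQuad R E₁ E₂ E₁ E₁ = kahlerQuad R E₁ E₂ E₂ E₂ :=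
  orthogonal_bisectional_claim_two_four_general R hsym2 hreal hnonneg E₁ E₂ hE₁ hE₂ horth hzero
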